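/- arXiv:1209.1004 — 3 statements merged into one kernel-verified Lean document; each statement's English description precedes it below -/
import Mathlib

section
/- In PSL(2,ℂ), the element x has order 5, y has order 2, z has order 2, z·x⁻¹ has order 3, x·y⁻¹ has order 3, and y·z⁻¹ has order 3 (so x, y, z satisfy the defining relations of the tetrahedral group presentation Γ(5,2,2,3,3,3) = ⟨x,y,z | x⁵, y², z², (zx⁻¹)³, (xy⁻¹)³, (yz⁻¹)³⟩). -/
/-!
Setup: `PSL(2,ℂ)` as the quotient of `SL(2,ℂ)` by its center, the constants
`u = (1+√5)/2`, `ω = (1+√(-3))/2 = (1+√3·i)/2`, and the generators of the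
tetrahedral groups of Neumann–Reid.
-/

noncomputable section

abbrev SL2C := Matrix.SpecialLinearGroup (Fin 2) ℂ

/-- `PSL(2,ℂ)`, the quotient of `SL(2,ℂ)` by its center `{±I}`. -/
abbrev PSL2C := SL2C ⧸ Subgroup.center SL2C

/-- The projection `SL(2,ℂ) → PSL(2,ℂ)`, `A ↦ [A]`. -/
def pr : SL2C →* PSL2C := QuotientGroup.mk' _

def u : ℂ := ((1 + Real.sqrt 5) / 2 : ℝ)
def ω : ℂ := (1 + Real.sqrt 3 * Complex.I) / 2

lemma u_ne : u ≠ 0 := Complex.ofReal_ne_zero.mpr (by positivity)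

lemma ω_ne : ω ≠ 0 := by
  unfold ω
  intro h
  rw [div_eq_zero_iff] at h
  rcases h with h | h
  · have := congrArg Complex.re h
    simp at this
  · norm_num at h

def xSL : SL2C := ⟨!![u, -u⁻¹; u, 0], by
  rw [Matrix.det_fin_two_of]; field_simp [u_ne]; ring⟩

def ySL : SL2C := ⟨!![0, ω * u⁻¹; -ω⁻¹ * u, 0], by
  rw [Matrix.det_fin_two_of]; field_simp [u_ne, ω_ne]; ring⟩

def zSL : SL2C := ⟨!![0, ω ^ 2 * u⁻¹; -(ω ^ 2)⁻¹ * u, 0], by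
  rw [Matrix.det_fin_two_of]; field_simp [u_ne, ω_ne]; ring⟩

def x : PSL2C := pr xSL
def y : PSL2C := pr ySL
def z : PSL2C := pr zSL

/-!
Every element `A` of `SL(2, R)` satisfies `A² = (tr A) A - 1` (Cayley–Hamilton), so a small
power of `A` is a scalar as soon as its trace satisfies a suitable polynomial relation: `A² = -1`
if `tr A = 0`, `A³ = -(tr A)` if `(tr A)² = 1`, and `A⁵ = -1` if `(tr A)² = tr A + 1`. Since a
scalar matrix `r` of `SL(2, R)` has trace `2r` with `r² = 1`, an element whose trace squared is not
`4` is nontrivial in `PSL(2, R)`, so its image there has exactly that prime order. The six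
elements of the theorem have traces `u`, `0`, `0`, `1`, `-1`, `1`, where `u² = u + 1` and
`ω + ω⁻¹ = 1`.
-/

open MatrixGroups Polynomial

section SqEqSmulSubOne

variable {R M : Type*} [CommRing R] [Ring M] [Algebra R M] {t : R} {a : M}

theorem pow_three_eq_of_sq_eq_smul_sub_one (ha : a ^ 2 = t • a - 1) :
    a ^ 3 = (t ^ 2 - 1) • a - t • 1 := by
  rw [pow_succ', ha, mul_sub, mul_smul_comm, ← sq, ha, mul_one]
  module

theorem pow_five_eq_neg_one_of_sq_eq_smul_sub_one (ha : a ^ 2 = t • a - 1)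
    (ht : t ^ 2 = t + 1) : a ^ 5 = -1 := by
  rw [show 5 = 2 + 3 from rfl, pow_add, pow_three_eq_of_sq_eq_smul_sub_one ha, ha]
  simp only [sub_mul, mul_sub, smul_mul_assoc, mul_smul_comm, one_mul, mul_one, ← sq, ha]
  linear_combination (norm := module) ht • ((t ^ 2 + t - 1) • a - (t + 1) • (1 : M))

end SqEqSmulSubOne

namespace Matrix.SpecialLinearGroup

variable {R : Type*} [CommRing R] (A : SL(2, R))

local notation:1024 "↑ₘ" A:1024 => ((A : SL(2, R)) : Matrix (Fin 2) (Fin 2) R)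

local notation "PSL(2, " R ")" => SL(2, R) ⧸ Subgroup.center SL(2, R)

theorem coe_sq_eq_trace_smul_sub_one : ↑ₘA ^ 2 = trace ↑ₘA • ↑ₘA - 1 := by
  nontriviality R
  have h := aeval_self_charpoly ↑ₘA
  rw [charpoly_fin_two, A.2] at h
  simp only [map_one, map_add, aeval_sub, map_pow, aeval_X, map_mul, aeval_C,
    ← Algebra.smul_def] at h
  linear_combination (norm := module) h

theorem trace_coe_mul_inv (B : SL(2, R)) :
    trace ↑ₘ(A * B⁻¹) =
      ↑ₘA 0 0 * ↑ₘB 1 1 - ↑ₘA 0 1 * ↑ₘB 1 0 - ↑ₘA 1 0 * ↑ₘB 0 1 + ↑ₘA 1 1 * ↑ₘB 0 0 := by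
  rw [coe_mul, coe_inv, adjugate_fin_two, trace_fin_two]
  simp only [mul_apply, of_apply, cons_val', cons_val_zero, cons_val_one, cons_val_fin_one,
    Fin.sum_univ_two]
  ring

theorem mk_eq_one_iff :
    (A : PSL(2, R)) = 1 ↔ ∃ r : R, r ^ 2 = 1 ∧ scalar (Fin 2) r = A := by
  rw [QuotientGroup.eq_one_iff, mem_center_iff, Fintype.card_fin]

theorem mk_ne_one_of_trace_sq_ne_four (h : trace ↑ₘA ^ 2 ≠ 4) : (A : PSL(2, R)) ≠ 1 := by
  intro h1
  obtain ⟨r, hr, hA⟩ := (mk_eq_one_iff A).mp h1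
  refine h ?_
  rw [← hA, trace_fin_two]
  simp only [scalar_apply, diagonal_apply_eq]
  linear_combination 4 * hr

theorem orderOf_mk_eq_prime {p : ℕ} (hp : p.Prime) {r : R} (hr : r ^ 2 = 1)
    (hpow : ↑ₘA ^ p = r • 1) (htr : trace ↑ₘA ^ 2 ≠ 4) : orderOf (A : PSL(2, R)) = p := by
  have : Fact p.Prime := ⟨hp⟩
  refine orderOf_eq_prime ?_ (mk_ne_one_of_trace_sq_ne_four A htr)
  rw [← QuotientGroup.mk_pow, mk_eq_one_iff]
  exact ⟨r, hr, by rw [coe_pow, hpow, scalar_apply, smul_one_eq_diagonal]⟩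

theorem orderOf_mk_eq_two_of_trace_eq_zero (h : trace ↑ₘA = 0) (h4 : (4 : R) ≠ 0) :
    orderOf (A : PSL(2, R)) = 2 := by
  refine orderOf_mk_eq_prime A Nat.prime_two (r := -1) (by norm_num) ?_
    (by rw [h]; exact fun h0 ↦ h4 (by linear_combination -h0))
  rw [coe_sq_eq_trace_smul_sub_one, h]
  module

theorem orderOf_mk_eq_three_of_trace_sq_eq_one (h : trace ↑ₘA ^ 2 = 1) (h3 : (3 : R) ≠ 0) :
    orderOf (A : PSL(2, R)) = 3 := by
  refine orderOf_mk_eq_prime A Nat.prime_three (r := -trace ↑ₘA) (by rw [neg_sq, h]) ?_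
    (fun h4 ↦ h3 (by linear_combination h - h4))
  rw [pow_three_eq_of_sq_eq_smul_sub_one (coe_sq_eq_trace_smul_sub_one A), h]
  module

theorem orderOf_mk_eq_five_of_trace_sq_eq_trace_add_one (h : trace ↑ₘA ^ 2 = trace ↑ₘA + 1)
    (h5 : (5 : R) ≠ 0) : orderOf (A : PSL(2, R)) = 5 := by
  refine orderOf_mk_eq_prime A Nat.prime_five (r := -1) (by norm_num) ?_
    (fun h4 ↦ h5 (by linear_combination h4 - (trace ↑ₘA + 3) * (h4 - h)))
  rw [pow_five_eq_neg_one_of_sq_eq_smul_sub_one (coe_sq_eq_trace_smul_sub_one A) h, neg_one_smul]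

end Matrix.SpecialLinearGroup

open Matrix SpecialLinearGroup

theorem u_sq : u ^ 2 = u + 1 := by
  have h5 : ((Real.sqrt 5 : ℝ) : ℂ) ^ 2 = 5 := by norm_cast; simp
  unfold u
  push_cast
  linear_combination (1 / 4) * h5

theorem ω_sq : ω ^ 2 = ω - 1 := by
  have h3 : ((Real.sqrt 3 : ℝ) : ℂ) ^ 2 = 3 := by norm_cast; simp
  unfold ω
  linear_combination (Complex.I ^ 2 / 4) * h3 + (3 / 4) * Complex.I_sq

theorem trace_xSL : trace (xSL : Matrix (Fin 2) (Fin 2) ℂ) = u := by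
  simp [xSL, trace_fin_two]

theorem trace_ySL : trace (ySL : Matrix (Fin 2) (Fin 2) ℂ) = 0 := by
  simp [ySL, trace_fin_two]

theorem trace_zSL : trace (zSL : Matrix (Fin 2) (Fin 2) ℂ) = 0 := by
  simp [zSL, trace_fin_two]

theorem trace_zSL_mul_xSL_inv : trace ((zSL * xSL⁻¹ : SL2C) : Matrix (Fin 2) (Fin 2) ℂ) = 1 := by
  rw [trace_coe_mul_inv]
  simp only [zSL, xSL, of_apply, cons_val', cons_val_zero, cons_val_one, cons_val_fin_one]
  field_simp [u_ne, ω_ne]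
  linear_combination -(ω ^ 2 + ω + 1) * ω_sq

theorem trace_xSL_mul_ySL_inv : trace ((xSL * ySL⁻¹ : SL2C) : Matrix (Fin 2) (Fin 2) ℂ) = -1 := by
  rw [trace_coe_mul_inv]
  simp only [ySL, xSL, of_apply, cons_val', cons_val_zero, cons_val_one, cons_val_fin_one]
  field_simp [u_ne, ω_ne]
  linear_combination -ω_sq

theorem trace_ySL_mul_zSL_inv : trace ((ySL * zSL⁻¹ : SL2C) : Matrix (Fin 2) (Fin 2) ℂ) = 1 := by
  rw [trace_coe_mul_inv]
  simp only [zSL, ySL, of_apply, cons_val', cons_val_zero, cons_val_one, cons_val_fin_one]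
  field_simp [u_ne, ω_ne]
  linear_combination ω_sq

/-- `x, y, z` satisfy the defining relations of `Γ(5,2,2,3,3,3)`. -/
theorem stmt0 :
    orderOf x = 5 ∧ orderOf y = 2 ∧ orderOf z = 2 ∧
    orderOf (z * x⁻¹) = 3 ∧ orderOf (x * y⁻¹) = 3 ∧ orderOf (y * z⁻¹) = 3 := by
  have h3 : (3 : ℂ) ≠ 0 := by norm_num
  have h4 : (4 : ℂ) ≠ 0 := by norm_num
  simp only [x, y, z, ← map_inv, ← map_mul]
  refine ⟨?_, ?_, ?_, ?_, ?_, ?_⟩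
  · exact orderOf_mk_eq_five_of_trace_sq_eq_trace_add_one xSL (by rw [trace_xSL, u_sq])
      (by norm_num)
  · exact orderOf_mk_eq_two_of_trace_eq_zero ySL trace_ySL h4
  · exact orderOf_mk_eq_two_of_trace_eq_zero zSL trace_zSL h4
  · exact orderOf_mk_eq_three_of_trace_sq_eq_one _ (by rw [trace_zSL_mul_xSL_inv, one_pow]) h3
  · exact orderOf_mk_eq_three_of_trace_sq_eq_one _ (by rw [trace_xSL_mul_ySL_inv, neg_one_sq]) h3
  · exact orderOf_mk_eq_three_of_trace_sq_eq_one _ (by rw [trace_ySL_mul_zSL_inv, one_pow]) h3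
end
end

section
/- Γ₃ is a subgroup of Γ₆, and the index of Γ₃ in Γ₆ equals 2. -/
/-!
Setup: `PSL(2,ℂ)` as the quotient of `SL(2,ℂ)` by its center, the constants
`u = (1+√5)/2`, `ω = (1+√(-3))/2 = (1+√3·i)/2`, and the generators of the
tetrahedral groups of Neumann–Reid.
-/

noncomputable section

def zSL' : SL2C := ⟨!![0, Complex.I * u⁻¹; Complex.I * u, 0], by
  rw [Matrix.det_fin_two_of]
  field_simp [u_ne]
  rw [Complex.I_sq]
  ring⟩

def z' : PSL2C := pr zSL'

/-- The tetrahedral group `Γ(5,2,2,3,3,3)` as a subgroup of `PSL(2,ℂ)`. -/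
def Γ₃ : Subgroup PSL2C := Subgroup.closure {x, y, z}

/-- The tetrahedral group `Γ(5,2,2,6,2,3)` as a subgroup of `PSL(2,ℂ)`. -/
def Γ₆ : Subgroup PSL2C := Subgroup.closure {x, y, z'}

/-!
Conjugation by the involution `z'` inverts `x` and swaps `y` and `z`, so it normalizes `Γ₃`, and
`z = z' y z'` puts `Γ₃` inside `Γ₆`. Hence every element of `Γ₆` lies in `Γ₃` or in `Γ₃ z'`, and the
index is at most 2. It is exactly 2 because `z' ∉ Γ₃`: the lifts `xSL`, `ySL`, `zSL` have entries in
the field `ℚ(√5, √-3)`, hence so does every lift of an element of `Γ₃` (lifts are unique up to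
sign), whereas the entry `i u⁻¹` of `zSL'` is not in it, as `i ∉ ℚ(√5, √-3)`.
-/

namespace Subgroup

variable {G : Type*} [Group G] {H : Subgroup G} {t : G}

theorem mem_or_mul_mem_of_mem_closure (hconj : ∀ h ∈ H, t * h * t⁻¹ ∈ H) (ht : t * t ∈ H)
    {s : Set G} (hs : ∀ g ∈ s, g ∈ H ∨ g * t ∈ H) {g : G} (hg : g ∈ closure s) :
    g ∈ H ∨ g * t ∈ H := by
  have hconj' : ∀ h ∈ H, t⁻¹ * h * t ∈ H := fun h hh => by
    have := mul_mem (mul_mem (inv_mem ht) (hconj h hh)) ht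
    rwa [show (t * t)⁻¹ * (t * h * t⁻¹) * (t * t) = t⁻¹ * h * t by group] at this
  induction hg using closure_induction with
  | mem g hg => exact hs g hg
  | one => exact .inl H.one_mem
  | mul a b _ _ ha hb =>
    rcases ha with ha | ha <;> rcases hb with hb | hb
    · exact .inl (mul_mem ha hb)
    · exact .inr (by simpa only [mul_assoc] using mul_mem ha hb)
    · exact .inr (by simpa [mul_assoc] using mul_mem ha (hconj' b hb))
    · refine .inl ?_
      have := mul_mem (mul_mem ha (hconj' _ hb)) (inv_mem ht)
      rwa [show a * t * (t⁻¹ * (b * t) * t) * (t * t)⁻¹ = a * b by group] at this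
  | inv a _ ha =>
    rcases ha with ha | ha
    · exact .inl (inv_mem ha)
    · refine .inr ?_
      have := mul_mem (hconj _ (inv_mem ha)) ht
      rwa [show t * (a * t)⁻¹ * t⁻¹ * (t * t) = a⁻¹ * t by group] at this

end Subgroup

namespace Matrix.SpecialLinearGroup

variable {n R : Type*} [Fintype n] [DecidableEq n] [CommRing R]

theorem mem_range_map_subtype_iff {F : Subring R} {A : SpecialLinearGroup n R} :
    A ∈ (map F.subtype).range ↔ ∀ i j, A i j ∈ F := by
  constructor
  · rintro ⟨B, rfl⟩ i j
    exact (B i j).2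
  · intro hA
    let B : Matrix n n F := Matrix.of fun i j => ⟨A i j, hA i j⟩
    have hB : F.subtype.mapMatrix B = A := rfl
    refine ⟨⟨B, F.subtype_injective ?_⟩, Subtype.ext hB⟩
    rw [RingHom.map_det, hB, det_coe, map_one]

theorem center_le_range_map_subtype [IsDomain R] (F : Subring R) :
    Subgroup.center (SpecialLinearGroup (Fin 2) R) ≤ (map F.subtype).range := by
  intro A hA
  obtain ⟨r, hr, hrA⟩ := mem_center_iff.mp hA
  have hr : r = 1 ∨ r = -1 := sq_eq_one_iff.mp (by simpa using hr)
  rw [mem_range_map_subtype_iff]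
  intro i j
  rw [← hrA]
  rcases hr with rfl | rfl <;> by_cases hij : i = j <;> simp [hij, F.neg_mem, F.one_mem, F.zero_mem]

end Matrix.SpecialLinearGroup

theorem sqrt_three_mul_rat_add_rat_mul_sqrt_five_ne_one (c d : ℚ) : √3 * (c + d * √5) ≠ 1 := by
  intro h
  have h3 : √3 ^ 2 = 3 := Real.sq_sqrt (by norm_num)
  have h5 : √5 ^ 2 = 5 := Real.sq_sqrt (by norm_num)
  have hcd : c * d = 0 := by
    by_contra hcd
    have h6cd : 6 * (c * d) ≠ 0 := mul_ne_zero (by norm_num) hcd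
    refine (Nat.prime_five.irrational_sqrt.mul_ratCast h6cd).ne_rat (1 - 3 * (c ^ 2 + 5 * d ^ 2)) ?_
    push_cast
    linear_combination (√3 * (c + d * √5) + 1) * h - (c + d * √5) ^ 2 * h3 - 3 * d ^ 2 * h5
  rcases mul_eq_zero.mp hcd with rfl | rfl
  · have hd : d ≠ 0 := by rintro rfl; simp at h
    have irr15 : Irrational √15 := irrational_sqrt_ofNat_iff.mpr fun ⟨r, hr⟩ =>
      Nat.not_exists_sq (m := 3) (by norm_num) (by norm_num) ⟨r, hr.symm⟩
    refine not_irrational_one (h ▸ ?_)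
    rw [show (15 : ℝ) = 3 * 5 by norm_num, Real.sqrt_mul (by norm_num)] at irr15
    convert irr15.mul_ratCast hd using 1
    push_cast
    ring
  · have hc : c ≠ 0 := by rintro rfl; simp at h
    refine not_irrational_one (h ▸ ?_)
    rw [Rat.cast_zero, zero_mul, add_zero]
    exact Nat.prime_three.irrational_sqrt.mul_ratCast hc

open Complex in
def ratSqrt5SqrtNeg3 : Subring ℂ where
  carrier := {v | ∃ a b c d : ℚ, v = a + b * √5 + (c + d * √5) * (√3 * I)}
  zero_mem' := ⟨0, 0, 0, 0, by simp⟩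
  one_mem' := ⟨1, 0, 0, 0, by simp⟩
  add_mem' := by
    rintro _ _ ⟨a, b, c, d, rfl⟩ ⟨a', b', c', d', rfl⟩
    exact ⟨a + a', b + b', c + c', d + d', by push_cast; ring⟩
  neg_mem' := by
    rintro _ ⟨a, b, c, d, rfl⟩
    exact ⟨-a, -b, -c, -d, by push_cast; ring⟩
  mul_mem' := by
    rintro _ _ ⟨a, b, c, d, rfl⟩ ⟨a', b', c', d', rfl⟩
    have h5 : ((√5 : ℝ) : ℂ) ^ 2 = 5 := by norm_cast; exact Real.sq_sqrt (by norm_num)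
    have h3 : ((√3 : ℝ) * I : ℂ) ^ 2 = -3 := by
      rw [mul_pow, I_sq]; norm_cast; rw [Real.sq_sqrt (by norm_num)]; norm_num
    refine ⟨a * a' + 5 * b * b' - 3 * c * c' - 15 * d * d',
      a * b' + a' * b - 3 * c * d' - 3 * c' * d,
      a * c' + a' * c + 5 * b * d' + 5 * b' * d,
      a * d' + a' * d + b * c' + b' * c, ?_⟩
    push_cast
    linear_combination (b * b' + (b * d' + b' * d) * (√3 * I) - 3 * d * d') * h5
      + ((c + d * √5) * (c' + d' * √5)) * h3

theorem u_mem_ratSqrt5SqrtNeg3 : u ∈ ratSqrt5SqrtNeg3 :=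
  ⟨1 / 2, 1 / 2, 0, 0, by simp [u]; ring⟩

theorem ω_mem_ratSqrt5SqrtNeg3 : ω ∈ ratSqrt5SqrtNeg3 :=
  ⟨1 / 2, 0, 1 / 2, 0, by simp [ω]; ring⟩

theorem I_notMem_ratSqrt5SqrtNeg3 : Complex.I ∉ ratSqrt5SqrtNeg3 := by
  rintro ⟨a, b, c, d, h⟩
  apply sqrt_three_mul_rat_add_rat_mul_sqrt_five_ne_one c d
  rw [mul_comm]
  simpa using (congrArg Complex.im h).symm

def sl2RatSqrt5SqrtNeg3 : Subgroup SL2C :=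
  (Matrix.SpecialLinearGroup.map ratSqrt5SqrtNeg3.subtype).range

theorem u_inv : u⁻¹ = u - 1 := by
  have h5 : ((√5 : ℝ) : ℂ) ^ 2 = 5 := by norm_cast; exact Real.sq_sqrt (by norm_num)
  refine inv_eq_of_mul_eq_one_right ?_
  simp only [u]
  push_cast
  linear_combination h5 / 4

theorem ω_pow_three : ω ^ 3 = -1 := by
  have h3 : ((√3 : ℝ) : ℂ) ^ 2 = 3 := by norm_cast; exact Real.sq_sqrt (by norm_num)
  rw [ω]
  linear_combination ((3 * Complex.I ^ 2 + √3 * Complex.I ^ 3) * h3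
    + (9 + 3 * √3 * Complex.I) * Complex.I_sq) / 8

theorem ω_inv : ω⁻¹ = -ω ^ 2 :=
  inv_eq_of_mul_eq_one_right (by linear_combination -ω_pow_three)

theorem generators_mem_sl2RatSqrt5SqrtNeg3 :
    ∀ A ∈ ({xSL, ySL, zSL} : Set SL2C), A ∈ sl2RatSqrt5SqrtNeg3 := by
  have hu := u_mem_ratSqrt5SqrtNeg3
  have hω := ω_mem_ratSqrt5SqrtNeg3
  simp only [sl2RatSqrt5SqrtNeg3, Matrix.SpecialLinearGroup.mem_range_map_subtype_iff]
  rintro _ (rfl | rfl | rfl) i j <;> fin_cases i <;> fin_cases j <;>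
    simp [xSL, ySL, zSL, u_inv, ← inv_pow, ← pow_mul, ω_inv, mul_mem, sub_mem, pow_mem, hu, hω]

section Relations

open Matrix.SpecialLinearGroup

theorem zSL'_mul_self : zSL' * zSL' = -1 := by
  refine Subtype.ext ?_
  simp only [coe_mul, coe_neg, coe_one, Matrix.one_fin_two]
  simp [zSL']
  grind [u_ne, Complex.I_sq]

theorem zSL'_mul_ySL_mul_zSL' : zSL' * ySL * zSL' = -zSL := by
  refine Subtype.ext ?_
  simp only [coe_mul, coe_neg]
  simp [zSL', ySL, zSL]
  grind [u_ne, ω_ne, Complex.I_sq, ω_pow_three]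

theorem zSL'_mul_xSL_mul_zSL' : zSL' * xSL * zSL' = -xSL⁻¹ := by
  refine Subtype.ext ?_
  simp only [coe_mul, coe_neg, coe_inv]
  simp [zSL', xSL, Matrix.adjugate_fin_two]
  grind [u_ne, Complex.I_sq]

end Relations

theorem pr_neg (A : SL2C) : pr (-A) = pr A := by
  have hneg : (-1 : SL2C) ∈ Subgroup.center SL2C := Subgroup.mem_center_iff.mpr fun g => by simp
  rw [← neg_one_mul, map_mul, show pr (-1) = 1 from (QuotientGroup.eq_one_iff _).mpr hneg, one_mul]

theorem z'_mul_self : z' * z' = 1 := by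
  rw [z', ← map_mul, zSL'_mul_self, pr_neg, map_one]

theorem z'_inv : z'⁻¹ = z' :=
  inv_eq_of_mul_eq_one_right z'_mul_self

theorem z'_mul_y_mul_z' : z' * y * z' = z := by
  rw [z', y, z, ← map_mul, ← map_mul, zSL'_mul_ySL_mul_zSL', pr_neg]

theorem z'_mul_z_mul_z' : z' * z * z' = y := by
  rw [← z'_mul_y_mul_z']
  simp only [← mul_assoc, z'_mul_self, one_mul]
  rw [mul_assoc, z'_mul_self, mul_one]

theorem z'_mul_x_mul_z' : z' * x * z' = x⁻¹ := by
  rw [z', x, ← map_mul, ← map_mul, zSL'_mul_xSL_mul_zSL', pr_neg, map_inv]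

theorem x_mem_Γ₃ : x ∈ Γ₃ := Subgroup.subset_closure (by simp)

theorem y_mem_Γ₃ : y ∈ Γ₃ := Subgroup.subset_closure (by simp)

theorem z_mem_Γ₃ : z ∈ Γ₃ := Subgroup.subset_closure (by simp)

theorem x_mem_Γ₆ : x ∈ Γ₆ := Subgroup.subset_closure (by simp)

theorem y_mem_Γ₆ : y ∈ Γ₆ := Subgroup.subset_closure (by simp)

theorem z'_mem_Γ₆ : z' ∈ Γ₆ := Subgroup.subset_closure (by simp)

theorem z'_conj_mem_Γ₃ {g : PSL2C} (hg : g ∈ Γ₃) : z' * g * z'⁻¹ ∈ Γ₃ := by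
  suffices Γ₃ ≤ Γ₃.comap (MulAut.conj z').toMonoidHom from this hg
  refine (Subgroup.closure_le _).mpr ?_
  rintro _ (rfl | rfl | rfl) <;>
    simp only [SetLike.mem_coe, Subgroup.mem_comap, MulEquiv.coe_toMonoidHom, MulAut.conj_apply,
      z'_inv, z'_mul_x_mul_z', z'_mul_y_mul_z', z'_mul_z_mul_z']
  exacts [inv_mem x_mem_Γ₃, z_mem_Γ₃, y_mem_Γ₃]

theorem Γ₃_le_Γ₆ : Γ₃ ≤ Γ₆ := by
  refine (Subgroup.closure_le _).mpr ?_
  rintro _ (rfl | rfl | rfl)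
  · exact x_mem_Γ₆
  · exact y_mem_Γ₆
  · rw [← z'_mul_y_mul_z']
    exact mul_mem (mul_mem z'_mem_Γ₆ y_mem_Γ₆) z'_mem_Γ₆

theorem Γ₃_le_map_sl2RatSqrt5SqrtNeg3 : Γ₃ ≤ sl2RatSqrt5SqrtNeg3.map pr := by
  refine (Subgroup.closure_le _).mpr ?_
  rintro _ (rfl | rfl | rfl)
  · exact ⟨xSL, generators_mem_sl2RatSqrt5SqrtNeg3 _ (by simp), rfl⟩
  · exact ⟨ySL, generators_mem_sl2RatSqrt5SqrtNeg3 _ (by simp), rfl⟩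
  · exact ⟨zSL, generators_mem_sl2RatSqrt5SqrtNeg3 _ (by simp), rfl⟩

theorem z'_notMem_Γ₃ : z' ∉ Γ₃ := by
  intro h
  have hker : pr.ker ≤ sl2RatSqrt5SqrtNeg3 := by
    rw [pr, QuotientGroup.ker_mk']
    exact Matrix.SpecialLinearGroup.center_le_range_map_subtype _
  have hz' : zSL' ∈ sl2RatSqrt5SqrtNeg3 := by
    rw [← Subgroup.comap_map_eq_self hker]
    exact Γ₃_le_map_sl2RatSqrt5SqrtNeg3 h
  rw [sl2RatSqrt5SqrtNeg3, Matrix.SpecialLinearGroup.mem_range_map_subtype_iff] at hz'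
  apply I_notMem_ratSqrt5SqrtNeg3
  simpa [zSL', u_ne] using mul_mem (hz' 0 1) u_mem_ratSqrt5SqrtNeg3

/-- `Γ(5,2,2,3,3,3)` is a subgroup of index 2 in `Γ(5,2,2,6,2,3)`. -/
theorem stmt2 : Γ₃ ≤ Γ₆ ∧ Γ₃.relIndex Γ₆ = 2 := by
  have hz'z' : z' * z' ∈ Γ₃ := z'_mul_self ▸ one_mem _
  refine ⟨Γ₃_le_Γ₆, Subgroup.relIndex_eq_two_iff_exists_notMem_and.mpr
    ⟨z', z'_mem_Γ₆, z'_notMem_Γ₃, fun g hg => ?_⟩⟩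
  refine (Subgroup.mem_or_mul_mem_of_mem_closure (fun _ => z'_conj_mem_Γ₃) hz'z' ?_ hg).symm
  rintro _ (rfl | rfl | rfl)
  exacts [.inl x_mem_Γ₃, .inl y_mem_Γ₃, .inr hz'z']
end
end

section
/- In PSL(2,ℂ), the word x·y⁻¹·z·y⁻¹ equals the class of the parabolic matrix [[1, 1], [0, 1]]. -/
/-!
Setup: `PSL(2,ℂ)` as the quotient of `SL(2,ℂ)` by its center, the constants
`u = (1+√5)/2`, `ω = (1+√(-3))/2 = (1+√3·i)/2`, and the generators of the
tetrahedral groups of Neumann–Reid.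
-/

noncomputable section

/-! For arbitrary nonzero `u, ω` one computes
`x y⁻¹ = [[-ω⁻¹, -ω], [0, -ω]]` and `z y⁻¹ = diag(ω, ω⁻¹)`, whose product is `-[[1, 1], [0, 1]]`;
since `-I` is central in `SL(2,ℂ)`, its class is that of `[[1, 1], [0, 1]]`. -/

open Matrix

section AntidiagonalWord

variable {K : Type*} [Field K] {u ω : K}

lemma x_mul_adjugate_y (hu : u ≠ 0) (hω : ω ≠ 0) :
    !![u, -u⁻¹; u, 0] * adjugate !![0, ω * u⁻¹; -ω⁻¹ * u, 0] = !![-ω⁻¹, -ω; 0, -ω] := by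
  rw [adjugate_fin_two_of]
  ext i j
  fin_cases i <;> fin_cases j <;> simp [mul_apply, Fin.sum_univ_two] <;> field_simp

lemma z_mul_adjugate_y (hu : u ≠ 0) (hω : ω ≠ 0) :
    !![0, ω ^ 2 * u⁻¹; -(ω ^ 2)⁻¹ * u, 0] * adjugate !![0, ω * u⁻¹; -ω⁻¹ * u, 0]
      = !![ω, 0; 0, ω⁻¹] := by
  rw [adjugate_fin_two_of]
  ext i j
  fin_cases i <;> fin_cases j <;> simp [mul_apply, Fin.sum_univ_two] <;> field_simp

lemma upper_mul_diagonal (hω : ω ≠ 0) :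
    !![-ω⁻¹, -ω; 0, -ω] * !![ω, 0; 0, ω⁻¹] = -!![(1 : K), 1; 0, 1] := by
  ext i j
  fin_cases i <;> fin_cases j <;> simp [mul_apply, Fin.sum_univ_two, hω]

end AntidiagonalWord

namespace Matrix.SpecialLinearGroup

variable {n R : Type*} [DecidableEq n] [Fintype n] [CommRing R] [Fact (Even (Fintype.card n))]

lemma neg_one_mem_center : (-1 : SpecialLinearGroup n R) ∈ Subgroup.center _ :=
  Subgroup.mem_center_iff.mpr fun g => by rw [mul_neg_one, neg_one_mul]

lemma mk_eq_mk_of_coe_eq_neg {A B : SpecialLinearGroup n R} (h : (A : Matrix n n R) = -B) :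
    (A : SpecialLinearGroup n R ⧸ Subgroup.center _) = B := by
  rw [show A = -B from Subtype.ext (h.trans (coe_neg B).symm), ← neg_one_mul, QuotientGroup.mk_mul,
    (QuotientGroup.eq_one_iff _).mpr neg_one_mem_center, one_mul]

end Matrix.SpecialLinearGroup

lemma coe_xSL_mul_ySL_inv_mul_zSL_mul_ySL_inv :
    ((xSL * ySL⁻¹ * zSL * ySL⁻¹ : SL2C) : Matrix (Fin 2) (Fin 2) ℂ) = -!![1, 1; 0, 1] := by
  simp only [Matrix.SpecialLinearGroup.coe_mul, Matrix.SpecialLinearGroup.coe_inv, mul_assoc]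
  rw [← mul_assoc]
  exact congrArg₂ (· * ·) (x_mul_adjugate_y u_ne ω_ne) (z_mul_adjugate_y u_ne ω_ne) |>.trans
    (upper_mul_diagonal ω_ne)

/-- The word `x·y⁻¹·z·y⁻¹` is the parabolic `[[1,1],[0,1]]`. -/
theorem stmt3 :
    x * y⁻¹ * z * y⁻¹ = pr ⟨!![1, 1; 0, 1], by simp [Matrix.det_fin_two_of]⟩ := by
  simp only [x, y, z, ← map_inv, ← map_mul]
  exact SpecialLinearGroup.mk_eq_mk_of_coe_eq_neg coe_xSL_mul_ySL_inv_mul_zSL_mul_ySL_inv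
end
end
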